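/- Let k be a field of characteristic zero, n ≥ 1, and let f be the free 3-step nilpotent Lie algebra on n generators over k, i.e. the quotient of the free Lie algebra on n generators by the fourth term γ₄ of its lower central series. Then f admits a Novikov structure. -/

import Mathlib

/-!
Let `eᵢ`, `i ∈ X`, be the generators of the free 3-step nilpotent Lie algebra `f` (`X` finite and
linearly ordered), and let `x₁ = ∑ xᵢ eᵢ` be the degree-one part of `x`, so `x - x₁ ∈ [f, f]`.
Define bilinear maps `T` and `σ` by
  `T(eᵢ, eⱼ) = ⁅eᵢ, eⱼ⁆` if `i < j`, and `0` otherwise;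
  `σ(⁅eᵢ, eⱼ⁆, eₗ) = ½ ⁅⁅eᵢ, e_{min j l}⁆, e_{max j l}⁆` if `i < j` and `i < l`, and `0` otherwise,
where `σ` only sees the degree-two part of its first and the degree-one part of its second
argument. Then `x·y = T(x₁, y₁) + ⁅x₁, y - y₁⁆ + σ(x, y) + σ(y, x)` is a Novikov product.
As `γ₄ = 0`, products land in `[f, f]` and only low degrees interact:
* `x·y - y·x = ⁅x, y⁆`, since `T(x, y) - T(y, x) = ⁅x₁, y₁⁆` and `[f, f]` is abelian;
* `(x·y)·z = σ(T(x₁, y₁), z₁)`, symmetric in `y, z` because `σ(⁅eᵢ, eⱼ⁆, eₗ)` is symmetric in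
  `j, l` once `i < j`;
* `x·(y·z) - (x·y)·z = ⁅x₁, T(y₁, z₁)⁆ + σ(T(y₁, z₁), x₁) - σ(T(x₁, y₁), z₁)` is trilinear in
  `x₁, y₁, z₁`; on generators `e_a, e_b, e_c` with `a < b` its symmetry in the first two is the
  Jacobi identity, antisymmetry, or trivial, according to the position of `c` (the `½` in `σ`
  is what makes the Jacobi case work).
The coordinates in degrees one and two are read off through the map to the two-step nilpotent
Lie algebra `(X → k) × (X → X → k)` with `⁅(v, _), (w, _)⁆ = (0, v ⊗ w - w ⊗ v)`.
-/

/-- A Novikov structure on a Lie algebra `g` over `k`: a bilinear product satisfying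
left-symmetry, the Novikov identity, and whose commutator is the Lie bracket. -/
def HasNovikovStructure (k g : Type*) [Field k] [LieRing g] [LieAlgebra k g] : Prop :=
  ∃ mul : g →ₗ[k] g →ₗ[k] g,
    (∀ x y z : g,
      mul x (mul y z) - mul (mul x y) z = mul y (mul x z) - mul (mul y x) z) ∧
    (∀ x y z : g, mul (mul x y) z = mul (mul x z) y) ∧
    (∀ x y : g, mul x y - mul y x = ⁅x, y⁆)

open LieModule

section ThreeStepNilpotent

variable {R g : Type*} [CommRing R] [LieRing g] [LieAlgebra R g]

theorem lie_mem_lowerCentralSeries_succ (x : g) {m : g} {i : ℕ}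
    (hm : m ∈ lowerCentralSeries R g g i) : ⁅x, m⁆ ∈ lowerCentralSeries R g g (i + 1) := by
  rw [lowerCentralSeries_succ]
  exact LieSubmodule.lie_mem_lie (LieSubmodule.mem_top x) hm

theorem lowerCentralSeries_succ_le {i : ℕ} {N : Submodule R g}
    (h : ∀ x : g, ∀ m ∈ lowerCentralSeries R g g i, ⁅x, m⁆ ∈ N) :
    LieSubmodule.toSubmodule (lowerCentralSeries R g g (i + 1)) ≤ N := by
  rw [lowerCentralSeries_succ, LieSubmodule.lieIdeal_oper_eq_linear_span', Submodule.span_le]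
  rintro _ ⟨x, -, m, hm, rfl⟩
  exact h x m hm

theorem lie_eq_zero_of_mem_lowerCentralSeries_two (hg : lowerCentralSeries R g g 3 = ⊥)
    (x : g) {u : g} (hu : u ∈ lowerCentralSeries R g g 2) : ⁅x, u⁆ = 0 := by
  have := lie_mem_lowerCentralSeries_succ x hu
  rwa [show 2 + 1 = 3 from rfl, hg, LieSubmodule.mem_bot] at this

theorem lie_eq_zero_of_mem_lowerCentralSeries_one (hg : lowerCentralSeries R g g 3 = ⊥)
    {u v : g} (hu : u ∈ lowerCentralSeries R g g 1) (hv : v ∈ lowerCentralSeries R g g 1) :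
    ⁅u, v⁆ = 0 := by
  rw [← lie_skew, neg_eq_zero]
  refine lowerCentralSeries_succ_le (i := 0) (N := LinearMap.ker (LieAlgebra.ad R g v))
    (fun x y _ => ?_) hu
  have hv' (y : g) : ⁅v, y⁆ ∈ lowerCentralSeries R g g 2 := by
    rw [← lie_skew]
    exact neg_mem (lie_mem_lowerCentralSeries_succ y hv)
  rw [LinearMap.mem_ker, LieAlgebra.ad_apply, leibniz_lie, ← lie_skew _ y,
    lie_eq_zero_of_mem_lowerCentralSeries_two hg y (hv' x),
    lie_eq_zero_of_mem_lowerCentralSeries_two hg x (hv' y), neg_zero, add_zero]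

end ThreeStepNilpotent

def TwoStep (R X : Type*) : Type _ := (X → R) × (X → X → R)

namespace TwoStep

variable {R X : Type*} [CommRing R]

instance : AddCommGroup (TwoStep R X) := inferInstanceAs (AddCommGroup ((X → R) × (X → X → R)))

instance : Module R (TwoStep R X) := inferInstanceAs (Module R ((X → R) × (X → X → R)))

def lin : TwoStep R X →ₗ[R] X → R := LinearMap.fst R (X → R) (X → X → R)

def quad : TwoStep R X →ₗ[R] X → X → R := LinearMap.snd R (X → R) (X → X → R)

def mk (v : X → R) (a : X → X → R) : TwoStep R X := (v, a)

@[simp] theorem lin_mk (v : X → R) (a : X → X → R) : lin (mk v a) = v := rfl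

@[simp] theorem quad_mk (v : X → R) (a : X → X → R) : quad (mk v a) = a := rfl

@[ext] theorem ext {u v : TwoStep R X} (h₁ : lin u = lin v) (h₂ : quad u = quad v) : u = v :=
  Prod.ext h₁ h₂

instance : LieRing (TwoStep R X) where
  bracket u v := mk 0 fun i j => lin u i * lin v j - lin v i * lin u j
  add_lie _ _ _ := by ext <;> simp; ring
  lie_add _ _ _ := by ext <;> simp; ring
  lie_self _ := by ext <;> simp
  leibniz_lie _ _ _ := by ext <;> simp

@[simp] theorem lin_lie (u v : TwoStep R X) : lin ⁅u, v⁆ = 0 := rfl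

@[simp] theorem quad_lie (u v : TwoStep R X) (i j : X) :
    quad ⁅u, v⁆ i j = lin u i * lin v j - lin v i * lin u j := rfl

instance : LieAlgebra R (TwoStep R X) where
  lie_smul _ _ _ := by ext <;> simp; ring

theorem lin_eq_zero_of_mem {u : TwoStep R X}
    (hu : u ∈ lowerCentralSeries R (TwoStep R X) (TwoStep R X) 1) : lin u = 0 :=
  lowerCentralSeries_succ_le (g := TwoStep R X) (i := 0) (N := LinearMap.ker lin)
    (fun _ _ _ => lin_lie _ _) hu

theorem lowerCentralSeries_two_eq_bot :
    lowerCentralSeries R (TwoStep R X) (TwoStep R X) 2 = ⊥ := by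
  rw [eq_bot_iff]
  refine lowerCentralSeries_succ_le (i := 1) (N := ⊥) fun u v hv => ?_
  rw [Submodule.mem_bot]
  ext <;> simp [lin_eq_zero_of_mem hv]

theorem lowerCentralSeries_three_eq_bot :
    lowerCentralSeries R (TwoStep R X) (TwoStep R X) 3 = ⊥ :=
  eq_bot_iff.2 <| (antitone_lowerCentralSeries R _ _ (by norm_num : 2 ≤ 3)).trans
    lowerCentralSeries_two_eq_bot.le

end TwoStep

noncomputable section

-- A `def` rather than an `abbrev`: on the bare quotient `lie_add`, `lie_smul`, `lie_sum`, ...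
-- fail to match, its `AddCommGroup` not being reducibly the one underlying its `LieRing`.
def FreeThreeStep (R X : Type*) [CommRing R] : Type _ :=
  FreeLieAlgebra R X ⧸ lowerCentralSeries R (FreeLieAlgebra R X) (FreeLieAlgebra R X) 3

namespace FreeThreeStep

variable {R X : Type*} [CommRing R]

instance : LieRing (FreeThreeStep R X) :=
  inferInstanceAs (LieRing (FreeLieAlgebra R X ⧸ lowerCentralSeries R _ (FreeLieAlgebra R X) 3))

instance : LieAlgebra R (FreeThreeStep R X) :=
  inferInstanceAs
    (LieAlgebra R (FreeLieAlgebra R X ⧸ lowerCentralSeries R _ (FreeLieAlgebra R X) 3))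

def mk : FreeLieAlgebra R X →ₗ⁅R⁆ FreeThreeStep R X :=
  { (lowerCentralSeries R (FreeLieAlgebra R X) (FreeLieAlgebra R X) 3).toSubmodule.mkQ with
    map_lie' := rfl }

theorem mk_surjective : Function.Surjective (mk (R := R) (X := X)) :=
  Submodule.mkQ_surjective _

variable (R) in
def gen (i : X) : FreeThreeStep R X := mk (FreeLieAlgebra.of R i)

theorem lowerCentralSeries_three_eq_bot :
    lowerCentralSeries R (FreeThreeStep R X) (FreeThreeStep R X) 3 = ⊥ := by
  rw [← LieIdeal.lowerCentralSeries_map_eq 3 (mk_surjective (R := R) (X := X)),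
    LieIdeal.map_eq_bot_iff]
  exact fun x hx => (Submodule.Quotient.mk_eq_zero _).2 hx

variable {L : Type*} [LieRing L] [LieAlgebra R L]

def lift (f : X → L) (hL : lowerCentralSeries R L L 3 = ⊥) : FreeThreeStep R X →ₗ⁅R⁆ L :=
  { Submodule.liftQ _ (FreeLieAlgebra.lift R f : FreeLieAlgebra R X →ₗ[R] L) fun x hx => by
      have := LieIdeal.map_lowerCentralSeries_le 3 (f := FreeLieAlgebra.lift R f)
        (LieIdeal.mem_map hx)
      rwa [hL, LieSubmodule.mem_bot] at this with
    map_lie' := by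
      rintro ⟨x⟩ ⟨y⟩
      exact (FreeLieAlgebra.lift R f).map_lie x y }

@[simp] theorem lift_gen (f : X → L) (hL : lowerCentralSeries R L L 3 = ⊥) (i : X) :
    lift f hL (gen R i) = f i :=
  FreeLieAlgebra.lift_of_apply f i

theorem lieSpan_range_gen :
    LieSubalgebra.lieSpan R (FreeThreeStep R X) (Set.range (gen R)) = ⊤ := by
  set K := LieSubalgebra.lieSpan R (FreeThreeStep R X) (Set.range (gen R))
  let φ : FreeLieAlgebra R X →ₗ⁅R⁆ K :=
    FreeLieAlgebra.lift R fun i => ⟨gen R i, LieSubalgebra.subset_lieSpan ⟨i, rfl⟩⟩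
  have hφ : K.incl.comp φ = mk := FreeLieAlgebra.hom_ext fun i => by simp [φ, gen]
  refine eq_top_iff.2 fun x _ => ?_
  obtain ⟨y, rfl⟩ := mk_surjective x
  rw [← hφ]
  exact (φ y).2

section Coordinates

variable [DecidableEq X]

def toTwoStep : FreeThreeStep R X →ₗ⁅R⁆ TwoStep R X :=
  lift (fun i => TwoStep.mk (Pi.single i 1) 0) TwoStep.lowerCentralSeries_three_eq_bot

def coord (i : X) : FreeThreeStep R X →ₗ[R] R :=
  LinearMap.proj i ∘ₗ TwoStep.lin ∘ₗ (toTwoStep (R := R) (X := X)).toLinearMap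

def coord₂ (i j : X) : FreeThreeStep R X →ₗ[R] R :=
  LinearMap.proj j ∘ₗ LinearMap.proj i ∘ₗ TwoStep.quad ∘ₗ
    (toTwoStep (R := R) (X := X)).toLinearMap

theorem coord_gen (i p : X) : coord i (gen R p) = if i = p then 1 else 0 := by
  simp [coord, toTwoStep, Pi.single_apply]

theorem coord_eq_zero_of_mem (i : X) {u : FreeThreeStep R X}
    (hu : u ∈ lowerCentralSeries R (FreeThreeStep R X) (FreeThreeStep R X) 1) :
    coord i u = 0 := by
  have := TwoStep.lin_eq_zero_of_mem
    (LieIdeal.map_lowerCentralSeries_le 1 (f := toTwoStep) (LieIdeal.mem_map hu))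
  simp [coord, this]

theorem coord₂_lie_gen (i j p q : X) : coord₂ i j ⁅gen R p, gen R q⁆ =
    (if i = p then 1 else 0) * (if j = q then 1 else 0) -
      (if i = q then 1 else 0) * (if j = p then 1 else 0) := by
  simp [coord₂, toTwoStep, Pi.single_apply]

theorem coord₂_eq_zero_of_mem (i j : X) {u : FreeThreeStep R X}
    (hu : u ∈ lowerCentralSeries R (FreeThreeStep R X) (FreeThreeStep R X) 2) :
    coord₂ i j u = 0 := by
  have := LieIdeal.map_lowerCentralSeries_le 2 (f := toTwoStep) (LieIdeal.mem_map hu)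
  rw [TwoStep.lowerCentralSeries_two_eq_bot, LieSubmodule.mem_bot] at this
  simp [coord₂, this]

variable [Fintype X]

def proj : FreeThreeStep R X →ₗ[R] FreeThreeStep R X := ∑ i, (coord i).smulRight (gen R i)

theorem proj_apply (x : FreeThreeStep R X) : proj x = ∑ i, coord i x • gen R i := by
  simp [proj]

theorem proj_gen (p : X) : proj (gen R p) = gen R p := by
  simp [proj_apply, coord_gen]

theorem proj_eq_zero_of_mem {u : FreeThreeStep R X}
    (hu : u ∈ lowerCentralSeries R (FreeThreeStep R X) (FreeThreeStep R X) 1) : proj u = 0 := by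
  simp [proj_apply, coord_eq_zero_of_mem _ hu]

theorem sub_proj_mem (x : FreeThreeStep R X) :
    x - proj x ∈ lowerCentralSeries R (FreeThreeStep R X) (FreeThreeStep R X) 1 := by
  have hx : x ∈ LieSubalgebra.lieSpan R _ (Set.range (gen R)) :=
    (lieSpan_range_gen (R := R)) ▸ trivial
  induction hx using LieSubalgebra.lieSpan_induction with
  | mem _ h => obtain ⟨p, rfl⟩ := h; simp [proj_gen]
  | zero => simp
  | add x y _ _ hx hy => simpa [add_sub_add_comm] using add_mem hx hy
  | smul t x _ hx => simpa [smul_sub] using Submodule.smul_mem _ t hx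
  | lie x y _ _ _ _ =>
    have h := lie_mem_lowerCentralSeries_succ (i := 0) x (LieSubmodule.mem_top (R := R) y)
    rwa [proj_eq_zero_of_mem h, sub_zero]

end Coordinates

section GeneratorProducts

variable {k : Type*} [Field k] [LinearOrder X]

def genMul₁₁ (i j : X) : FreeThreeStep k X := if i < j then ⁅gen k i, gen k j⁆ else 0

def genMul₂₁ (i j l : X) : FreeThreeStep k X :=
  if i < j ∧ i < l then (2⁻¹ : k) • ⁅⁅gen k i, gen k (min j l)⁆, gen k (max j l)⁆ else 0

theorem genMul₁₁_sub_genMul₁₁ (i j : X) :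
    genMul₁₁ i j - genMul₁₁ j i = ⁅gen k i, gen k j⁆ := by
  rcases lt_trichotomy i j with h | rfl | h
  · simp [genMul₁₁, h, lt_asymm h]
  · simp
  · simp [genMul₁₁, h, lt_asymm h]

theorem coord₂_genMul₁₁ {i j : X} (h : i < j) (p q : X) :
    coord₂ i j (genMul₁₁ (k := k) p q) = if p = i ∧ q = j then 1 else 0 := by
  unfold genMul₁₁
  split_ifs <;> simp [coord₂_lie_gen] <;> grind

theorem genMul₂₁_comm (i j l : X) : genMul₂₁ (k := k) i j l = genMul₂₁ i l j := by
  simp only [genMul₂₁, min_comm j l, max_comm j l, and_comm]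

def genAssociator (a b c : X) : FreeThreeStep k X :=
  ⁅gen k a, genMul₁₁ b c⁆ + genMul₂₁ b c a - genMul₂₁ a b c

theorem genAssociator_comm_of_lt [NeZero (2 : k)] {a b : X} (hab : a < b) (c : X) :
    genAssociator (k := k) a b c = genAssociator b a c := by
  simp only [genAssociator, genMul₁₁, genMul₂₁, lt_asymm hab, false_and, if_false]
  rcases le_or_gt c a with hca | hac
  · simp [hca.not_gt, (hca.trans hab.le).not_gt]
  rcases lt_trichotomy c b with hcb | rfl | hbc
  · simp only [hab, hac, lt_asymm hcb, min_eq_left hcb.le, min_eq_right hcb.le,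
      max_eq_left hcb.le, max_eq_right hcb.le, and_self, if_true, if_false, lie_zero]
    rw [← lie_skew (gen k b)]
    match_scalars
    field_simp
    ring
  · simp only [hab, lt_irrefl, and_self, if_true, if_false, min_self, max_self, lie_zero]
    rw [← lie_skew (gen k c)]
    match_scalars
    field_simp
    ring
  · simp only [hab, hac, hbc, min_eq_left hbc.le, min_eq_right hbc.le,
      max_eq_left hbc.le, max_eq_right hbc.le, and_self, true_and, if_true, if_false,
      lie_lie]
    match_scalars <;> field_simp <;> ring

theorem genAssociator_comm [NeZero (2 : k)] (a b c : X) :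
    genAssociator (k := k) a b c = genAssociator b a c := by
  rcases lt_trichotomy a b with h | rfl | h
  · exact genAssociator_comm_of_lt h c
  · rfl
  · exact (genAssociator_comm_of_lt h c).symm

end GeneratorProducts

section NovikovProduct

variable {k : Type*} [Field k] [LinearOrder X] [Fintype X]

-- `γ i` is Mathlib's `lowerCentralSeries … i`, the `γᵢ₊₁` of the usual numbering.
local notation "γ" => lowerCentralSeries k (FreeThreeStep k X) (FreeThreeStep k X)

def mul₁₁ : FreeThreeStep k X →ₗ[k] FreeThreeStep k X →ₗ[k] FreeThreeStep k X :=
  ∑ i, ∑ j, (coord i).smulRight ((coord j).smulRight (genMul₁₁ i j))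

def mul₂₁ : FreeThreeStep k X →ₗ[k] FreeThreeStep k X →ₗ[k] FreeThreeStep k X :=
  ∑ i, ∑ j, ∑ l, (coord₂ i j).smulRight ((coord l).smulRight (genMul₂₁ i j l))

theorem mul₁₁_apply (x y : FreeThreeStep k X) :
    mul₁₁ x y = ∑ i, ∑ j, (coord i x * coord j y) • genMul₁₁ i j := by
  simp [mul₁₁, mul_smul]

theorem mul₂₁_apply (a u : FreeThreeStep k X) :
    mul₂₁ a u = ∑ i, ∑ j, ∑ l, (coord₂ i j a * coord l u) • genMul₂₁ i j l := by
  simp [mul₂₁, mul_smul]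

theorem mul₁₁_mem (x y : FreeThreeStep k X) : mul₁₁ x y ∈ γ 1 := by
  rw [mul₁₁_apply]
  refine Submodule.sum_mem _ fun i _ => Submodule.sum_mem _ fun j _ => Submodule.smul_mem _ _ ?_
  unfold genMul₁₁
  split_ifs
  · exact lie_mem_lowerCentralSeries_succ (i := 0) _ (LieSubmodule.mem_top _)
  · exact zero_mem _

theorem mul₁₁_eq_zero_of_mem_left {u : FreeThreeStep k X} (hu : u ∈ γ 1)
    (y : FreeThreeStep k X) : mul₁₁ u y = 0 := by
  simp [mul₁₁_apply, coord_eq_zero_of_mem _ hu]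

theorem mul₁₁_eq_zero_of_mem_right (x : FreeThreeStep k X) {u : FreeThreeStep k X}
    (hu : u ∈ γ 1) : mul₁₁ x u = 0 := by
  simp [mul₁₁_apply, coord_eq_zero_of_mem _ hu]

theorem coord₂_mul₁₁ {i j : X} (h : i < j) (x y : FreeThreeStep k X) :
    coord₂ i j (mul₁₁ x y) = coord i x * coord j y := by
  simp [mul₁₁_apply, coord₂_genMul₁₁ h, ite_and]

theorem lie_proj_proj (x y : FreeThreeStep k X) :
    ⁅proj x, proj y⁆ = ∑ i, ∑ j, (coord i x * coord j y) • ⁅gen k i, gen k j⁆ := by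
  simp only [proj_apply, sum_lie, lie_sum, smul_lie, lie_smul, Finset.smul_sum, smul_smul]
  rw [Finset.sum_comm]
  simp only [mul_comm]

theorem mul₁₁_sub_mul₁₁ (x y : FreeThreeStep k X) :
    mul₁₁ x y - mul₁₁ y x = ⁅proj x, proj y⁆ := by
  rw [lie_proj_proj, mul₁₁_apply, mul₁₁_apply]
  conv_lhs => arg 2; rw [Finset.sum_comm]
  simp only [← Finset.sum_sub_distrib, ← genMul₁₁_sub_genMul₁₁, smul_sub, mul_comm]

theorem mul₂₁_mem (a u : FreeThreeStep k X) : mul₂₁ a u ∈ γ 2 := by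
  rw [mul₂₁_apply]
  refine Submodule.sum_mem _ fun i _ => Submodule.sum_mem _ fun j _ =>
    Submodule.sum_mem _ fun l _ => Submodule.smul_mem _ _ ?_
  unfold genMul₂₁
  split_ifs
  · refine Submodule.smul_mem _ _ ?_
    rw [← lie_skew]
    exact neg_mem (lie_mem_lowerCentralSeries_succ _
      (lie_mem_lowerCentralSeries_succ (i := 0) _ (LieSubmodule.mem_top _)))
  · exact zero_mem _

theorem mul₂₁_eq_zero_of_mem_left {a : FreeThreeStep k X} (ha : a ∈ γ 2)
    (u : FreeThreeStep k X) : mul₂₁ a u = 0 := by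
  simp [mul₂₁_apply, coord₂_eq_zero_of_mem _ _ ha]

theorem mul₂₁_eq_zero_of_mem_right (a : FreeThreeStep k X) {u : FreeThreeStep k X}
    (hu : u ∈ γ 1) : mul₂₁ a u = 0 := by
  simp [mul₂₁_apply, coord_eq_zero_of_mem _ hu]

theorem mul₂₁_mul₁₁ (x y z : FreeThreeStep k X) : mul₂₁ (mul₁₁ x y) z =
    ∑ i, ∑ j, ∑ l, (coord i x * coord j y * coord l z) • genMul₂₁ i j l := by
  rw [mul₂₁_apply]
  refine Finset.sum_congr rfl fun i _ => Finset.sum_congr rfl fun j _ =>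
    Finset.sum_congr rfl fun l _ => ?_
  by_cases h : i < j
  · rw [coord₂_mul₁₁ h]
  · simp [genMul₂₁, h]

theorem mul₂₁_mul₁₁_rotate (x y z : FreeThreeStep k X) : mul₂₁ (mul₁₁ y z) x =
    ∑ a, ∑ b, ∑ c, (coord a x * coord b y * coord c z) • genMul₂₁ b c a := by
  rw [mul₂₁_mul₁₁, eq_comm, Finset.sum_comm]
  refine Finset.sum_congr rfl fun b _ => ?_
  rw [Finset.sum_comm]
  refine Finset.sum_congr rfl fun c _ => Finset.sum_congr rfl fun a _ => ?_
  rw [mul_rotate]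

theorem lie_proj_mul₁₁ (x y z : FreeThreeStep k X) : ⁅proj x, mul₁₁ y z⁆ =
    ∑ a, ∑ b, ∑ c, (coord a x * coord b y * coord c z) • ⁅gen k a, genMul₁₁ b c⁆ := by
  rw [proj_apply, sum_lie]
  simp only [mul₁₁_apply, smul_lie, lie_sum, lie_smul, smul_smul, mul_comm _ (coord _ x),
    mul_assoc]

-- With `x₁ = proj x`, `T = mul₁₁` and `σ = mul₂₁`, this is the product `x·y` of the header.
def novikovMul : FreeThreeStep k X →ₗ[k] FreeThreeStep k X →ₗ[k] FreeThreeStep k X :=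
  LinearMap.mk₂ k (fun x y => mul₁₁ x y + ⁅proj x, y - proj y⁆ + mul₂₁ x y + mul₂₁ y x)
    (fun _ _ _ => by simp only [map_add, LinearMap.add_apply, add_lie]; abel)
    (fun _ _ _ => by simp only [map_smul, LinearMap.smul_apply, smul_lie, smul_add])
    (fun _ _ _ => by simp only [map_add, LinearMap.add_apply, lie_add, lie_sub]; abel)
    (fun _ _ _ => by
      simp only [map_smul, LinearMap.smul_apply, lie_sub, lie_smul, smul_add, smul_sub])

theorem novikovMul_apply (x y : FreeThreeStep k X) :
    novikovMul x y = mul₁₁ x y + ⁅proj x, y - proj y⁆ + mul₂₁ x y + mul₂₁ y x :=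
  rfl

theorem novikovMul_sub_mul₁₁_mem (x y : FreeThreeStep k X) :
    novikovMul x y - mul₁₁ x y ∈ γ 2 := by
  rw [novikovMul_apply, add_assoc, add_assoc, add_sub_cancel_left]
  exact add_mem (lie_mem_lowerCentralSeries_succ _ (sub_proj_mem y))
    (add_mem (mul₂₁_mem x y) (mul₂₁_mem y x))

theorem novikovMul_mem (x y : FreeThreeStep k X) : novikovMul x y ∈ γ 1 := by
  have h := antitone_lowerCentralSeries k _ _ (by norm_num : 1 ≤ 2)
    (novikovMul_sub_mul₁₁_mem x y)
  simpa using add_mem (mul₁₁_mem x y) h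

theorem novikovMul_novikovMul_left (x y z : FreeThreeStep k X) :
    novikovMul (novikovMul x y) z = mul₂₁ (mul₁₁ x y) z := by
  have hxy := novikovMul_mem x y
  have h := mul₂₁_eq_zero_of_mem_left (novikovMul_sub_mul₁₁_mem x y) z
  rw [map_sub, LinearMap.sub_apply, sub_eq_zero] at h
  rw [novikovMul_apply, mul₁₁_eq_zero_of_mem_left hxy, proj_eq_zero_of_mem hxy, zero_lie,
    mul₂₁_eq_zero_of_mem_right _ hxy, h, zero_add, zero_add, add_zero]

theorem novikovMul_novikovMul_right (x y z : FreeThreeStep k X) :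
    novikovMul x (novikovMul y z) = ⁅proj x, mul₁₁ y z⁆ + mul₂₁ (mul₁₁ y z) x := by
  have hyz := novikovMul_mem y z
  have h₁ := lie_eq_zero_of_mem_lowerCentralSeries_two lowerCentralSeries_three_eq_bot (proj x)
    (novikovMul_sub_mul₁₁_mem y z)
  have h₂ := mul₂₁_eq_zero_of_mem_left (novikovMul_sub_mul₁₁_mem y z) x
  rw [lie_sub, sub_eq_zero] at h₁
  rw [map_sub, LinearMap.sub_apply, sub_eq_zero] at h₂
  rw [novikovMul_apply, mul₁₁_eq_zero_of_mem_right _ hyz, proj_eq_zero_of_mem hyz, sub_zero, h₁,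
    mul₂₁_eq_zero_of_mem_right _ hyz, h₂, zero_add, add_zero]

theorem novikovMul_sub_novikovMul (x y : FreeThreeStep k X) :
    novikovMul x y - novikovMul y x = ⁅x, y⁆ := by
  have h := lie_eq_zero_of_mem_lowerCentralSeries_one lowerCentralSeries_three_eq_bot
    (sub_proj_mem x) (sub_proj_mem y)
  rw [sub_lie, lie_sub, lie_sub] at h
  rw [novikovMul_apply, novikovMul_apply, ← lie_skew (proj y), sub_lie, lie_sub]
  linear_combination (norm := module) mul₁₁_sub_mul₁₁ x y - h

theorem novikovMul_right_comm (x y z : FreeThreeStep k X) :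
    novikovMul (novikovMul x y) z = novikovMul (novikovMul x z) y := by
  rw [novikovMul_novikovMul_left, novikovMul_novikovMul_left, mul₂₁_mul₁₁, mul₂₁_mul₁₁]
  refine Finset.sum_congr rfl fun i _ => ?_
  rw [Finset.sum_comm]
  refine Finset.sum_congr rfl fun j _ => Finset.sum_congr rfl fun l _ => ?_
  rw [genMul₂₁_comm, mul_right_comm]

theorem novikovMul_associator (x y z : FreeThreeStep k X) :
    novikovMul x (novikovMul y z) - novikovMul (novikovMul x y) z =
      ∑ a, ∑ b, ∑ c, (coord a x * coord b y * coord c z) • genAssociator a b c := by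
  rw [novikovMul_novikovMul_right, novikovMul_novikovMul_left, lie_proj_mul₁₁,
    mul₂₁_mul₁₁_rotate, mul₂₁_mul₁₁]
  simp only [genAssociator, smul_add, smul_sub, Finset.sum_add_distrib, Finset.sum_sub_distrib]

theorem novikovMul_left_symm [NeZero (2 : k)] (x y z : FreeThreeStep k X) :
    novikovMul x (novikovMul y z) - novikovMul (novikovMul x y) z =
      novikovMul y (novikovMul x z) - novikovMul (novikovMul y x) z := by
  rw [novikovMul_associator, novikovMul_associator y x z, Finset.sum_comm]
  refine Finset.sum_congr rfl fun a _ => Finset.sum_congr rfl fun b _ =>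
    Finset.sum_congr rfl fun c _ => ?_
  rw [genAssociator_comm, mul_comm (coord b x)]

theorem hasNovikovStructure [NeZero (2 : k)] : HasNovikovStructure k (FreeThreeStep k X) :=
  ⟨novikovMul, novikovMul_left_symm, novikovMul_right_comm, novikovMul_sub_novikovMul⟩

end NovikovProduct

end FreeThreeStep

end

theorem free_threeStep_nilpotent_hasNovikov
    (k : Type*) [Field k] [CharZero k] (n : ℕ) :
    HasNovikovStructure k
      (FreeLieAlgebra k (Fin n) ⧸
        LieModule.lowerCentralSeries k (FreeLieAlgebra k (Fin n)) (FreeLieAlgebra k (Fin n)) 3) :=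
  FreeThreeStep.hasNovikovStructure
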